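/- Let T be a normal subgroup of N, and let N₁ = H₁u₁ and N₂ = H₂u₂ with H₁, H₂ ∈ T and u₁, u₂ ∈ N. If T is abelian and [u₁,u₂] = 1, then N₁N₂ = N₂N₁ if and only if H₁⁻¹·(u₂H₁u₂⁻¹) = H₂⁻¹·(u₁H₂u₁⁻¹). -/
import Mathlib

private lemma aux_comm {N : Type*} [Group N] {H₁ H₂ A B : N}
    (c : H₁ * H₂ = H₂ * H₁) :
    H₁ * A = H₂ * B ↔ H₁⁻¹ * B = H₂⁻¹ * A := by
  constructor
  · intro h
    have hB : B = H₂⁻¹ * (H₁ * A) := by rw [h]; group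
    rw [hB, show H₁⁻¹ * (H₂⁻¹ * (H₁ * A)) = (H₂ * H₁)⁻¹ * (H₁ * A) by group,
      ← c]
    group
  · intro h
    have hB : B = H₁ * (H₂⁻¹ * A) := by rw [← h]; group
    rw [hB, show H₂ * (H₁ * (H₂⁻¹ * A)) = H₂ * H₁ * H₂⁻¹ * A by group, ← c]
    group

/-- Let `T` be an abelian normal subgroup of `N`, `N₁ = H₁u₁`, `N₂ = H₂u₂` with
`H₁, H₂ ∈ T` and `[u₁, u₂] = 1`. Then `N₁N₂ = N₂N₁` iff
`H₁⁻¹ · H₁^{u₂} = H₂⁻¹ · H₂^{u₁}`. -/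
theorem commute_iff_of_torus_parts {N : Type*} [Group N]
    (T : Subgroup N) [T.Normal]
    (habel : ∀ x ∈ T, ∀ y ∈ T, x * y = y * x)
    (H₁ H₂ : N) (hH₁ : H₁ ∈ T) (hH₂ : H₂ ∈ T)
    (u₁ u₂ : N) (hu : u₁ * u₂ = u₂ * u₁) :
    (H₁ * u₁) * (H₂ * u₂) = (H₂ * u₂) * (H₁ * u₁) ↔
      H₁⁻¹ * (u₂ * H₁ * u₂⁻¹) = H₂⁻¹ * (u₁ * H₂ * u₁⁻¹) := by
  have lhs_eq : (H₁ * u₁) * (H₂ * u₂) = H₁ * (u₁ * H₂ * u₁⁻¹) * (u₁ * u₂) := by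
    group
  have rhs_eq : (H₂ * u₂) * (H₁ * u₁) = H₂ * (u₂ * H₁ * u₂⁻¹) * (u₂ * u₁) := by
    group
  rw [lhs_eq, rhs_eq, hu, mul_left_inj, mul_assoc, mul_assoc,
    aux_comm (habel _ hH₁ _ hH₂), ← mul_assoc, ← mul_assoc]
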